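/- For the two-layer noisy network L(σ, ε) = ℓ(φ(w·φ(v + σ·ε) + z₂)) with ε standard normal, if ℓ and φ are continuously differentiable with bounded derivatives, then d/dσ E[L(σ, ε)] = E[δ(σ,ε)·ε], where δ(σ,ε) = ℓ'(·)·φ'(·)·w·φ'(v+σε) is the backpropagated residual error (unbiasedness of the pathwise estimator). -/

import Mathlib

/-!
Differentiate under the integral sign. The loss is `h (σ * ε)` for the fixed map
`h x = ℓ (φ (w * φ (v + x) + z₂))`, whose derivative is bounded by `Cℓ * Cφ * |w| * Cφ` by the
chain rule. Hence the `σ`-derivative `h' (σ * ε) * ε` of the integrand is dominated, uniformly in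
`σ`, by a multiple of `|ε|`, which is integrable since `ε` is Gaussian.
-/

open MeasureTheory ProbabilityTheory

lemma integrable_of_map_eq_gaussianReal {Ω : Type*} [MeasurableSpace Ω] {μ : Measure Ω}
    {X : Ω → ℝ} (hX : AEMeasurable X μ) {m : ℝ} {v : NNReal} (hlaw : μ.map X = gaussianReal m v) :
    Integrable X μ :=
  (integrable_map_measure aestronglyMeasurable_id hX).mp (hlaw ▸ IsGaussian.integrable_id)

lemma abs_sub_le_of_abs_deriv_le {h : ℝ → ℝ} {C : ℝ} (hd : Differentiable ℝ h)
    (hC : ∀ x, |deriv h x| ≤ C) (x y : ℝ) : |h y - h x| ≤ C * |y - x| :=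
  convex_univ.norm_image_sub_le_of_norm_deriv_le (fun x _ => hd x) (fun x _ => hC x)
    (Set.mem_univ x) (Set.mem_univ y)

section Pathwise

variable {Ω : Type*} [MeasurableSpace Ω] {μ : Measure Ω} [IsFiniteMeasure μ] {ε : Ω → ℝ}
  {h : ℝ → ℝ} {C : ℝ}

lemma integrable_comp_mul_of_abs_deriv_le (hd : Differentiable ℝ h) (hC : ∀ x, |deriv h x| ≤ C)
    (hε : Integrable ε μ) (σ : ℝ) : Integrable (fun ω => h (σ * ε ω)) μ := by
  refine Integrable.mono' ((integrable_const |h 0|).add (hε.abs.const_mul (C * |σ|)))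
    (hd.continuous.comp_aestronglyMeasurable (hε.aestronglyMeasurable.const_mul σ))
    (.of_forall fun ω => ?_)
  have := abs_sub_le_of_abs_deriv_le hd hC 0 (σ * ε ω)
  rw [sub_zero, abs_mul] at this
  simp only [Pi.add_apply, Real.norm_eq_abs]
  linarith [abs_sub_abs_le_abs_sub (h (σ * ε ω)) (h 0)]

theorem hasDerivAt_integral_comp_mul (hd : Differentiable ℝ h) (hC : ∀ x, |deriv h x| ≤ C)
    (hε : Integrable ε μ) (σ : ℝ) :
    HasDerivAt (fun s => ∫ ω, h (s * ε ω) ∂μ) (∫ ω, deriv h (σ * ε ω) * ε ω ∂μ) σ := by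
  have hε_meas := hε.aestronglyMeasurable
  have hF_meas : ∀ s, AEStronglyMeasurable (fun ω => h (s * ε ω)) μ := fun s =>
    hd.continuous.comp_aestronglyMeasurable (hε_meas.const_mul s)
  have hF'_meas : AEStronglyMeasurable (fun ω => deriv h (σ * ε ω) * ε ω) μ :=
    ((measurable_deriv h).comp_aemeasurable
      (hε_meas.aemeasurable.const_mul σ)).aestronglyMeasurable.mul hε_meas
  have hF'_le : ∀ s ω, ‖deriv h (s * ε ω) * ε ω‖ ≤ C * |ε ω| := fun s ω => by
    rw [Real.norm_eq_abs, abs_mul]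
    exact mul_le_mul_of_nonneg_right (hC _) (abs_nonneg _)
  have hF_deriv : ∀ s ω, HasDerivAt (fun s => h (s * ε ω)) (deriv h (s * ε ω) * ε ω) s :=
    fun s ω => (hd _).hasDerivAt.comp s ((hasDerivAt_mul_const (ε ω)).congr_deriv (by simp))
  exact (hasDerivAt_integral_of_dominated_loc_of_deriv_le Filter.univ_mem (.of_forall hF_meas)
    (integrable_comp_mul_of_abs_deriv_le hd hC hε σ) hF'_meas
    (.of_forall fun ω s _ => hF'_le s ω) (hε.abs.const_mul C)
    (.of_forall fun ω s _ => hF_deriv s ω)).2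

end Pathwise

lemma hasDerivAt_two_layer {ℓ φ : ℝ → ℝ} (hℓ : Differentiable ℝ ℓ) (hφ : Differentiable ℝ φ)
    (v w z₂ x : ℝ) :
    HasDerivAt (fun x => ℓ (φ (w * φ (v + x) + z₂)))
      (deriv ℓ (φ (w * φ (v + x) + z₂)) * deriv φ (w * φ (v + x) + z₂) * w *
        deriv φ (v + x)) x := by
  have hinner : HasDerivAt (fun x => w * φ (v + x) + z₂) (w * deriv φ (v + x)) x :=
    (((hφ _).hasDerivAt.comp_const_add v x).const_mul w).add_const z₂
  exact ((hℓ _).hasDerivAt.comp x ((hφ _).hasDerivAt.comp x hinner)).congr_deriv (by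
    simp only [Function.comp_apply]; ring)

/-- Unbiasedness of the pathwise estimator for the two-layer noisy network:
`d/dσ E[ℓ(φ(w·φ(v+σε)+z₂))] = E[δ(σ,ε)·ε]` with `δ` the backpropagated
residual error, for `ε ~ N(0,1)` and `ℓ, φ` C¹ with bounded derivatives. -/
theorem two_layer_unbiased_pathwise {Ω : Type*} [MeasurableSpace Ω]
    (μ : Measure Ω) [IsProbabilityMeasure μ] (ε : Ω → ℝ) (hε : Measurable ε)
    (hlaw : μ.map ε = gaussianReal 0 1)
    (ℓ φ : ℝ → ℝ) (hℓ : ContDiff ℝ 1 ℓ) (hφ : ContDiff ℝ 1 φ)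
    (Cℓ Cφ : ℝ) (hCℓ : ∀ x, |deriv ℓ x| ≤ Cℓ) (hCφ : ∀ x, |deriv φ x| ≤ Cφ)
    (v w z₂ σ : ℝ) :
    HasDerivAt (fun s => ∫ ω, ℓ (φ (w * φ (v + s * ε ω) + z₂)) ∂μ)
      (∫ ω, (deriv ℓ (φ (w * φ (v + σ * ε ω) + z₂)) *
          deriv φ (w * φ (v + σ * ε ω) + z₂) * w * deriv φ (v + σ * ε ω)) * ε ω ∂μ)
      σ := by
  have hℓd := hℓ.differentiable one_ne_zero
  have hφd := hφ.differentiable one_ne_zero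
  have hL := hasDerivAt_two_layer hℓd hφd v w z₂
  have hLd : Differentiable ℝ fun x => ℓ (φ (w * φ (v + x) + z₂)) :=
    fun x => (hL x).differentiableAt
  have hbound : ∀ x, |deriv (fun x => ℓ (φ (w * φ (v + x) + z₂))) x| ≤ Cℓ * Cφ * |w| * Cφ := by
    intro x
    rw [(hL x).deriv, abs_mul, abs_mul, abs_mul]
    have hCℓ0 : 0 ≤ Cℓ := (abs_nonneg _).trans (hCℓ 0)
    have hCφ0 : 0 ≤ Cφ := (abs_nonneg _).trans (hCφ 0)
    gcongr
    exacts [hCℓ _, hCφ _, hCφ _]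
  simpa only [fun x => (hL x).deriv] using hasDerivAt_integral_comp_mul hLd hbound
    (integrable_of_map_eq_gaussianReal hε.aemeasurable hlaw) σ
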